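/- arXiv:2112.01655 — 4 statements merged into one kernel-verified Lean document; each statement's English description precedes it below -/
import Mathlib

section
/- Let A be an (c+1)×(c+1) invertible block upper bidiagonal matrix with diagonal blocks A_{i,i} and superdiagonal blocks A_{i,i+1}. Suppose each A_{i,i} is invertible with ‖A_{i,i}^{-1}‖ ≤ Λ and ‖A_{i,i}^{-1} A_{i,i+1}‖ ≤ ζ for some ζ < 1. Then ‖A^{-1}‖ ≤ Λ (1 − ζ^{c+1})/(1 − ζ) ≤ Λ/(1 − ζ). -/
/-!
Write `A = Δ (1 + N)` with `Δ` the block diagonal part and `N = Δ⁻¹ (A - Δ)` the block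
superdiagonal matrix with blocks `A_{i,i}⁻¹ A_{i,i+1}`. Since `N` is nilpotent of index `c + 1`,
`A⁻¹ = (∑_{k ≤ c} (-N)^k) Δ⁻¹`; the `k`-th term is the `k`-th block diagonal `Λ_k` of `A⁻¹`.
A matrix with nonzero blocks on a single block diagonal has spectral norm at most the largest
norm of its blocks, so `‖N‖ ≤ ζ`, `‖Δ⁻¹‖ ≤ Λ`, and `‖A⁻¹‖ ≤ Λ ∑_{k ≤ c} ζ^k`.
-/

/-- Spectral (operator 2-) norm of a real matrix. -/
noncomputable def specNorm {m n : Type*} [Fintype m] [Fintype n] [DecidableEq n]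
    (A : Matrix m n ℝ) : ℝ :=
  ‖LinearMap.toContinuousLinearMap (Matrix.toEuclideanLin A)‖

open Finset Matrix
open scoped Matrix.Norms.L2Operator

lemma Fin.sum_ite_val_eq {M : Type*} [AddCommMonoid M] {n : ℕ} (m : ℕ) (f : Fin n → M) :
    ∑ j : Fin n, (if (j : ℕ) = m then f j else 0) = if h : m < n then f ⟨m, h⟩ else 0 := by
  split_ifs with h
  · rw [Fintype.sum_eq_single ⟨m, h⟩ fun j hj => if_neg fun hjm => hj (Fin.ext hjm)]
    simp
  · exact Fintype.sum_eq_zero _ fun j => if_neg fun hjm : (j : ℕ) = m => h (hjm ▸ j.isLt)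

lemma Finset.sum_range_shift_le (g : ℕ → ℝ) (hg : ∀ j, 0 ≤ g j) (n k : ℕ)
    (hgn : ∀ j, n ≤ j → g j = 0) :
    ∑ i ∈ range n, g (i + k) ≤ ∑ j ∈ range n, g j := by
  have hsplit := sum_range_add g k n
  have htail : ∑ j ∈ range k, g (n + j) = 0 := sum_eq_zero fun j _ => hgn _ (by omega)
  rw [add_comm k n, sum_range_add, htail, add_zero] at hsplit
  have hcomm : ∑ i ∈ range n, g (i + k) = ∑ i ∈ range n, g (k + i) :=
    sum_congr rfl fun i _ => congrArg g (add_comm i k)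
  linarith [sum_nonneg fun j (_ : j ∈ range k) => hg j]

section NeumannSeries

variable {R : Type*}

lemma mul_one_add_mul_geom_sum_neg_mul [Ring R] {d d' x : R} {n : ℕ} (hd : d * d' = 1)
    (hx : x ^ n = 0) : d * (1 + x) * ((∑ i ∈ range n, (-x) ^ i) * d') = 1 := by
  rw [mul_assoc d, ← mul_assoc (1 + x), ← sub_neg_eq_add, mul_neg_geom_sum, neg_pow, hx,
    mul_zero, sub_zero, one_mul, hd]

lemma norm_pow_mul_le [NormedRing R] (a b : R) (n : ℕ) : ‖a ^ n * b‖ ≤ ‖a‖ ^ n * ‖b‖ := by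
  induction n with
  | zero => simp
  | succ n ih =>
    calc ‖a ^ (n + 1) * b‖ = ‖a * (a ^ n * b)‖ := by rw [pow_succ', mul_assoc]
      _ ≤ ‖a‖ * (‖a‖ ^ n * ‖b‖) := (norm_mul_le _ _).trans (by gcongr)
      _ = ‖a‖ ^ (n + 1) * ‖b‖ := by ring

lemma norm_geom_sum_neg_mul_le [NormedRing R] {x y : R} {ζ Λ : ℝ} (hx : ‖x‖ ≤ ζ)
    (hy : ‖y‖ ≤ Λ) (n : ℕ) : ‖(∑ i ∈ range n, (-x) ^ i) * y‖ ≤ Λ * ∑ i ∈ range n, ζ ^ i := by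
  rw [sum_mul, mul_sum]
  refine (norm_sum_le _ _).trans (sum_le_sum fun i _ => ?_)
  calc ‖(-x) ^ i * y‖ ≤ ‖x‖ ^ i * ‖y‖ := by simpa only [norm_neg] using norm_pow_mul_le (-x) y i
    _ ≤ Λ * ζ ^ i := by
      rw [mul_comm]
      exact mul_le_mul hy (pow_le_pow_left₀ (norm_nonneg x) hx i) (by positivity)
        ((norm_nonneg y).trans hy)

end NeumannSeries

namespace Matrix

variable {ι R : Type*}

/-- Blocks are indexed by `ℕ` so that products shift indices without wrapping around; only the
`N i` with `i + k < n` are used. -/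
def blockShift [Zero R] (n k : ℕ) (N : ℕ → Matrix ι ι R) : Matrix (Fin n × ι) (Fin n × ι) R :=
  of fun p q => if (q.1 : ℕ) = p.1 + k then N p.1 p.2 q.2 else 0

lemma blockShift_congr [Zero R] {n k : ℕ} {M N : ℕ → Matrix ι ι R} (h : ∀ i < n, M i = N i) :
    blockShift n k M = blockShift n k N := by
  ext p q
  simp only [blockShift, of_apply, h p.1 p.1.isLt]

lemma blockShift_of_le [Zero R] {n k : ℕ} (h : n ≤ k) (N : ℕ → Matrix ι ι R) :
    blockShift n k N = 0 := by
  ext p q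
  exact if_neg (by omega)

lemma blockShift_mul [Fintype ι] [NonUnitalNonAssocSemiring R] (n k l : ℕ)
    (M N : ℕ → Matrix ι ι R) :
    blockShift n k M * blockShift n l N = blockShift n (k + l) fun i => M i * N (i + k) := by
  ext p q
  simp only [blockShift, mul_apply, of_apply, Fintype.sum_prod_type, ite_mul, zero_mul,
    sum_ite_irrel, sum_const_zero, Fin.sum_ite_val_eq]
  simp only [mul_ite, mul_zero, sum_ite_irrel, sum_const_zero, ← add_assoc]
  have := q.1.isLt
  split_ifs <;> first | rfl | omega

lemma blockShift_zero_one [DecidableEq ι] [NonAssocSemiring R] (n : ℕ) :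
    blockShift n 0 (fun _ => (1 : Matrix ι ι R)) = 1 := by
  ext p q
  simp only [blockShift, of_apply, add_zero, one_apply, Prod.ext_iff, Fin.val_inj,
    eq_comm (a := q.1)]
  split_ifs <;> simp_all

lemma blockShift_one_pow_eq_zero [Fintype ι] [DecidableEq ι] [Semiring R] (n : ℕ)
    (N : ℕ → Matrix ι ι R) : blockShift n 1 N ^ n = 0 := by
  have hpow : ∀ k, ∃ M, blockShift n 1 N ^ k = blockShift n k M := by
    intro k
    induction k with
    | zero => exact ⟨_, (blockShift_zero_one n).symm⟩
    | succ k ih =>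
      obtain ⟨M, hM⟩ := ih
      exact ⟨_, by rw [pow_succ, hM, blockShift_mul]⟩
  obtain ⟨M, hM⟩ := hpow n
  rw [hM, blockShift_of_le le_rfl]

lemma l2_opNorm_blockShift_le {𝕜 : Type*} [RCLike 𝕜] [Fintype ι] [DecidableEq ι] (n k : ℕ)
    (N : ℕ → Matrix ι ι 𝕜) {C : ℝ} (hC : 0 ≤ C) (hN : ∀ i, i + k < n → ‖N i‖ ≤ C) :
    ‖blockShift n k N‖ ≤ C := by
  rw [← l2_opNorm_toEuclideanCLM]
  set T := toEuclideanCLM (n := Fin n × ι) (𝕜 := 𝕜) (blockShift n k N)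
  refine ContinuousLinearMap.opNorm_le_bound _ hC fun x => ?_
  set row : ℕ → EuclideanSpace 𝕜 ι := fun j =>
    if h : j < n then WithLp.toLp 2 fun b => x (⟨j, h⟩, b) else 0 with hrow_def
  have hrow : ∀ i : Fin n, ∑ a, ‖x (i, a)‖ ^ 2 = ‖row i‖ ^ 2 := fun i => by
    simp [hrow_def, EuclideanSpace.norm_sq_eq]
  have hTx : ∀ (i : Fin n) a, T x (i, a) = if i + k < n then (N i *ᵥ row (i + k)) a else 0 := by
    intro i a
    by_cases hik : i + k < n <;>
      simp [T, blockShift, mulVec, dotProduct, Fintype.sum_prod_type, ite_mul, sum_ite_irrel,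
        Fin.sum_ite_val_eq, hrow_def, hik]
  have hblock : ∀ i : Fin n, ∑ a, ‖T x (i, a)‖ ^ 2 ≤ C ^ 2 * ‖row (i + k)‖ ^ 2 := by
    intro i
    by_cases hik : i + k < n
    · calc ∑ a, ‖T x (i, a)‖ ^ 2
          = ‖(EuclideanSpace.equiv ι 𝕜).symm (N i *ᵥ row (i + k))‖ ^ 2 := by
            simp [EuclideanSpace.norm_sq_eq, hTx, hik]
        _ ≤ (C * ‖row (i + k)‖) ^ 2 := by
            gcongr
            exact (l2_opNorm_mulVec _ _).trans (by gcongr; exact hN i hik)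
        _ = C ^ 2 * ‖row (i + k)‖ ^ 2 := mul_pow _ _ _
    · simp only [hTx, if_neg hik, norm_zero, ne_eq, OfNat.ofNat_ne_zero, not_false_eq_true,
        zero_pow, sum_const_zero]
      positivity
  refine (sq_le_sq₀ (norm_nonneg _) (by positivity)).mp ?_
  calc ‖T x‖ ^ 2
      = ∑ i : Fin n, ∑ a, ‖T x (i, a)‖ ^ 2 := by
        rw [EuclideanSpace.norm_sq_eq, Fintype.sum_prod_type]
    _ ≤ ∑ i : Fin n, C ^ 2 * ‖row (i + k)‖ ^ 2 := sum_le_sum fun i _ => hblock i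
    _ ≤ C ^ 2 * ∑ j ∈ range n, ‖row j‖ ^ 2 := by
        rw [← mul_sum, Fin.sum_univ_eq_sum_range (fun i => ‖row (i + k)‖ ^ 2)]
        exact mul_le_mul_of_nonneg_left (sum_range_shift_le
          (fun j => ‖row j‖ ^ 2) (fun _ => by positivity) n k
          fun j hj => by simp [hrow_def, not_lt.mpr hj]) (by positivity)
    _ = (C * ‖x‖) ^ 2 := by
        rw [mul_pow, EuclideanSpace.norm_sq_eq, Fintype.sum_prod_type,
          ← Fin.sum_univ_eq_sum_range (fun j => ‖row j‖ ^ 2)]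
        exact congrArg _ (sum_congr rfl fun i _ => (hrow i).symm)

def blockBidiagonal [Zero R] [Add R] (n : ℕ) (D S : ℕ → Matrix ι ι R) :
    Matrix (Fin n × ι) (Fin n × ι) R :=
  blockShift n 0 D + blockShift n 1 S

variable [Fintype ι] [DecidableEq ι]

lemma inv_blockBidiagonal [CommRing R] {n : ℕ} {D S : ℕ → Matrix ι ι R}
    (hD : ∀ i < n, IsUnit (D i).det) :
    (blockBidiagonal n D S)⁻¹ =
      (∑ k ∈ range n, (-blockShift n 1 fun i => (D i)⁻¹ * S i) ^ k) *
        blockShift n 0 fun i => (D i)⁻¹ := by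
  have hfactor : blockBidiagonal n D S =
      blockShift n 0 D * (1 + blockShift n 1 fun i => (D i)⁻¹ * S i) := by
    rw [mul_add, mul_one, blockShift_mul, blockBidiagonal]
    exact congrArg _ (blockShift_congr fun i hi => (mul_nonsing_inv_cancel_left _ _ (hD i hi)).symm)
  refine inv_eq_right_inv ?_
  rw [hfactor]
  refine mul_one_add_mul_geom_sum_neg_mul ?_ (blockShift_one_pow_eq_zero _ _)
  rw [blockShift_mul, ← blockShift_zero_one n]
  exact blockShift_congr fun i hi => mul_nonsing_inv _ (hD i hi)

lemma l2_opNorm_inv_blockBidiagonal_le {𝕜 : Type*} [RCLike 𝕜] {n : ℕ} {D S : ℕ → Matrix ι ι 𝕜}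
    {Λ ζ : ℝ} (hD : ∀ i < n, IsUnit (D i).det) (hΛ0 : 0 ≤ Λ) (hΛ : ∀ i < n, ‖(D i)⁻¹‖ ≤ Λ)
    (hζ0 : 0 ≤ ζ) (hζ : ∀ i, i + 1 < n → ‖(D i)⁻¹ * S i‖ ≤ ζ) :
    ‖(blockBidiagonal n D S)⁻¹‖ ≤ Λ * ∑ k ∈ range n, ζ ^ k := by
  rw [inv_blockBidiagonal hD]
  exact norm_geom_sum_neg_mul_le (l2_opNorm_blockShift_le _ _ _ hζ0 hζ)
    (l2_opNorm_blockShift_le _ _ _ hΛ0 fun i hi => hΛ i (by omega)) n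

end Matrix

theorem stmt_2_general {ι : Type*} [Fintype ι] [DecidableEq ι] (c : ℕ)
    (D S : Fin (c + 1) → Matrix ι ι ℝ)
    (A : Matrix (Fin (c + 1) × ι) (Fin (c + 1) × ι) ℝ)
    (hA : A = fun p q =>
      if q.1 = p.1 then D p.1 p.2 q.2
      else if (q.1 : ℕ) = (p.1 : ℕ) + 1 then S p.1 p.2 q.2
      else 0)
    (hD : ∀ i, IsUnit (D i))
    (Λ ζ : ℝ) (hζ0 : 0 ≤ ζ) (hζ1 : ζ < 1)
    (hΛ : ∀ i, specNorm (D i)⁻¹ ≤ Λ)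
    (hζ : ∀ i : Fin (c + 1), (i : ℕ) < c → specNorm ((D i)⁻¹ * S i) ≤ ζ) :
    specNorm A⁻¹ ≤ Λ * (1 - ζ ^ (c + 1)) / (1 - ζ) ∧
      Λ * (1 - ζ ^ (c + 1)) / (1 - ζ) ≤ Λ / (1 - ζ) := by
  have hA' : A = blockBidiagonal (c + 1) (fun i => D (Fin.ofNat _ i))
      fun i => S (Fin.ofNat _ i) := by
    rw [hA]
    ext p q
    simp only [blockBidiagonal, blockShift, Matrix.add_apply, of_apply, Fin.ofNat_val_eq_self,
      add_zero, Fin.val_inj]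
    split_ifs <;> simp_all
  have hΛ0 : 0 ≤ Λ := (norm_nonneg _).trans (hΛ 0)
  have hbound := l2_opNorm_inv_blockBidiagonal_le (n := c + 1) (S := fun i => S (Fin.ofNat _ i))
    (fun i _ => (isUnit_iff_isUnit_det _).mp (hD _)) hΛ0 (fun i _ => hΛ _) hζ0
    fun i hi => hζ _ (by rw [Fin.val_ofNat, Nat.mod_eq_of_lt (by omega)]; omega)
  rw [← hA', geom_sum_eq hζ1.ne, ← neg_div_neg_eq, neg_sub, neg_sub, ← mul_div_assoc] at hbound
  exact ⟨hbound, div_le_div_of_nonneg_right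
    (mul_le_of_le_one_right hΛ0 (by linarith [pow_nonneg hζ0 (c + 1)])) (by linarith)⟩

theorem stmt_2 {ι : Type*} [Fintype ι] [DecidableEq ι] [Nonempty ι] (c : ℕ)
    (D S : Fin (c + 1) → Matrix ι ι ℝ)
    (A : Matrix (Fin (c + 1) × ι) (Fin (c + 1) × ι) ℝ)
    (hA : A = fun p q =>
      if q.1 = p.1 then D p.1 p.2 q.2
      else if (q.1 : ℕ) = (p.1 : ℕ) + 1 then S p.1 p.2 q.2
      else 0)
    (hAunit : IsUnit A) (hD : ∀ i, IsUnit (D i))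
    (Λ ζ : ℝ) (hζ0 : 0 ≤ ζ) (hζ1 : ζ < 1)
    (hΛ : ∀ i, specNorm (D i)⁻¹ ≤ Λ)
    (hζ : ∀ i : Fin (c + 1), (i : ℕ) < c → specNorm ((D i)⁻¹ * S i) ≤ ζ) :
    specNorm A⁻¹ ≤ Λ * (1 - ζ ^ (c + 1)) / (1 - ζ) ∧
      Λ * (1 - ζ ^ (c + 1)) / (1 - ζ) ≤ Λ / (1 - ζ) :=
  stmt_2_general c D S A hA hD Λ ζ hζ0 hζ1 hΛ hζ
end

section
/- Let F₀ ∈ ℝⁿ, F₁ an invertible n×n matrix, F₂ an n×n² matrix. Define α = ‖F₁^{-1}‖·‖F₀‖, β = ‖F₁^{-1}‖·‖F₂‖, R = 4αβ. Define vectors ν_i ∈ ℝⁿ by F₁ν₀ + F₀ = 0 and F₁ν_i + F₂ Σ_{j=0}^{i−1} ν_j ⊗ ν_{i−1−j} = 0 for i ≥ 1. Then for all i ≥ 0, ‖ν_i‖ ≤ α R^i. -/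
/-- Euclidean (l2) norm of a real vector. -/
noncomputable def vecNorm {ι : Type*} [Fintype ι] (v : ι → ℝ) : ℝ :=
  ‖(WithLp.equiv 2 (ι → ℝ)).symm v‖

/-- Kronecker product of two vectors. -/
def vkron {n : ℕ} (u v : Fin n → ℝ) : Fin n × Fin n → ℝ := fun p => u p.1 * v p.2

/-! Since `F₁ ν_i = -F₂ Σ_j ν_j ⊗ ν_{i-1-j}`, the norms satisfy
`‖ν_i‖ ≤ β Σ_j ‖ν_j‖ ‖ν_{i-1-j}‖` and `‖ν_0‖ ≤ α`. Any nonnegative sequence with these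
bounds is dominated by `γ_i β^i α^(i+1)`, where `γ_i` is the Catalan number, because the
majorant satisfies the Catalan recurrence with equality; finally `γ_i ≤ 4^i`. -/

open Finset

lemma vecNorm_nonneg {ι : Type*} [Fintype ι] (v : ι → ℝ) : 0 ≤ vecNorm v :=
  norm_nonneg _

lemma specNorm_nonneg {m n : Type*} [Fintype m] [Fintype n] [DecidableEq n]
    (A : Matrix m n ℝ) : 0 ≤ specNorm A := norm_nonneg _

lemma vecNorm_neg {ι : Type*} [Fintype ι] (v : ι → ℝ) : vecNorm (-v) = vecNorm v :=
  norm_neg ((WithLp.equiv 2 (ι → ℝ)).symm v)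

lemma vecNorm_sum_le {ι κ : Type*} [Fintype ι] (s : Finset κ) (f : κ → ι → ℝ) :
    vecNorm (∑ j ∈ s, f j) ≤ ∑ j ∈ s, vecNorm (f j) := by
  rw [vecNorm, show (WithLp.equiv 2 (ι → ℝ)).symm (∑ j ∈ s, f j)
      = ∑ j ∈ s, (WithLp.equiv 2 (ι → ℝ)).symm (f j) from WithLp.toLp_sum 2 (ι → ℝ) s f]
  exact norm_sum_le _ _

lemma vecNorm_eq_sqrt_sum_sq {ι : Type*} [Fintype ι] (v : ι → ℝ) :
    vecNorm v = Real.sqrt (∑ i, v i ^ 2) := by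
  simp only [vecNorm, EuclideanSpace.norm_eq, Real.norm_eq_abs, sq_abs]
  rfl

lemma vecNorm_vkron {n : ℕ} (u v : Fin n → ℝ) :
    vecNorm (vkron u v) = vecNorm u * vecNorm v := by
  rw [vecNorm_eq_sqrt_sum_sq, vecNorm_eq_sqrt_sum_sq, vecNorm_eq_sqrt_sum_sq,
    ← Real.sqrt_mul (by positivity), Finset.sum_mul_sum, Fintype.sum_prod_type]
  simp only [vkron, mul_pow]

lemma vecNorm_mulVec_le {m n : Type*} [Fintype m] [Fintype n] [DecidableEq n]
    (A : Matrix m n ℝ) (v : n → ℝ) :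
    vecNorm (A.mulVec v) ≤ specNorm A * vecNorm v := by
  simpa [vecNorm, specNorm, Matrix.toLpLin_toLp] using
    (LinearMap.toContinuousLinearMap (Matrix.toEuclideanLin A)).le_opNorm
      ((WithLp.equiv 2 (n → ℝ)).symm v)

lemma vecNorm_le_of_mulVec_add_eq_zero {n : Type*} [Fintype n] [DecidableEq n]
    {A : Matrix n n ℝ} (hA : IsUnit A) {x y : n → ℝ} (h : A.mulVec x + y = 0) :
    vecNorm x ≤ specNorm A⁻¹ * vecNorm y := by
  have hx : x = -(A⁻¹.mulVec y) := by
    rw [← Matrix.mulVec_neg, ← eq_neg_of_add_eq_zero_left h, Matrix.mulVec_mulVec,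
      Matrix.nonsing_inv_mul A ((Matrix.isUnit_iff_isUnit_det A).mp hA), Matrix.one_mulVec]
  rw [hx, vecNorm_neg]
  exact vecNorm_mulVec_le _ _

lemma catalan_le_four_pow (n : ℕ) : catalan n ≤ 4 ^ n :=
  calc catalan n = n.centralBinom / (n + 1) := catalan_eq_centralBinom_div n
    _ ≤ n.centralBinom := Nat.div_le_self _ _
    _ = (2 * n).choose n := Nat.centralBinom_eq_two_mul_choose n
    _ ≤ (2 * n + 1).choose n := Nat.choose_le_choose n (Nat.le_succ _)
    _ ≤ 4 ^ n := Nat.choose_middle_le_pow n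

section CatalanMajorant

variable {a : ℕ → ℝ} {α β : ℝ}

lemma le_catalan_mul_pow_of_le_sum_antidiagonal (ha : ∀ i, 0 ≤ a i) (hβ : 0 ≤ β)
    (h0 : a 0 ≤ α) (hsucc : ∀ k, a (k + 1) ≤ β * ∑ p ∈ antidiagonal k, a p.1 * a p.2)
    (i : ℕ) : a i ≤ catalan i * β ^ i * α ^ (i + 1) := by
  induction i using Nat.strong_induction_on with
  | _ i ih =>
    rcases i with _ | k
    · simpa using h0
    have hterm : ∀ p ∈ antidiagonal k,
        a p.1 * a p.2 ≤ (catalan p.1 * catalan p.2 : ℝ) * β ^ k * α ^ (k + 2) := by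
      rintro ⟨p, q⟩ hpq
      rw [Finset.HasAntidiagonal.mem_antidiagonal] at hpq
      have hp := ih p (by omega)
      calc a p * a q
          ≤ (catalan p * β ^ p * α ^ (p + 1)) * (catalan q * β ^ q * α ^ (q + 1)) :=
            mul_le_mul hp (ih q (by omega)) (ha q) ((ha p).trans hp)
        _ = (catalan p * catalan q : ℝ) * β ^ (p + q) * α ^ (p + q + 2) := by ring
        _ = _ := by rw [hpq]
    calc a (k + 1)
        ≤ β * ∑ p ∈ antidiagonal k, (catalan p.1 * catalan p.2 : ℝ) * β ^ k * α ^ (k + 2) :=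
          (hsucc k).trans (mul_le_mul_of_nonneg_left (sum_le_sum hterm) hβ)
      _ = catalan (k + 1) * β ^ (k + 1) * α ^ (k + 1 + 1) := by
          rw [← sum_mul, ← sum_mul, catalan_succ']
          push_cast
          ring

lemma le_mul_four_mul_pow_of_le_sum_antidiagonal (ha : ∀ i, 0 ≤ a i) (hα : 0 ≤ α)
    (hβ : 0 ≤ β) (h0 : a 0 ≤ α)
    (hsucc : ∀ k, a (k + 1) ≤ β * ∑ p ∈ antidiagonal k, a p.1 * a p.2) (i : ℕ) :
    a i ≤ α * (4 * α * β) ^ i :=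
  calc a i ≤ catalan i * β ^ i * α ^ (i + 1) :=
        le_catalan_mul_pow_of_le_sum_antidiagonal ha hβ h0 hsucc i
    _ ≤ 4 ^ i * β ^ i * α ^ (i + 1) := by
        gcongr
        exact_mod_cast catalan_le_four_pow i
    _ = α * (4 * α * β) ^ i := by ring

end CatalanMajorant

theorem stmt_5 (n : ℕ) (F₀ : Fin n → ℝ) (F₁ : Matrix (Fin n) (Fin n) ℝ)
    (F₂ : Matrix (Fin n) (Fin n × Fin n) ℝ) (hF₁ : IsUnit F₁)
    (α β R : ℝ)
    (hα : α = specNorm F₁⁻¹ * vecNorm F₀)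
    (hβ : β = specNorm F₁⁻¹ * specNorm F₂)
    (hR : R = 4 * α * β)
    (ν : ℕ → Fin n → ℝ)
    (h0 : F₁.mulVec (ν 0) + F₀ = 0)
    (hrec : ∀ i : ℕ, 1 ≤ i →
      F₁.mulVec (ν i) +
        F₂.mulVec (∑ j ∈ Finset.range i, vkron (ν j) (ν (i - 1 - j))) = 0) :
    ∀ i : ℕ, vecNorm (ν i) ≤ α * R ^ i := by
  have hsucc : ∀ k, vecNorm (ν (k + 1)) ≤
      β * ∑ p ∈ antidiagonal k, vecNorm (ν p.1) * vecNorm (ν p.2) := by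
    intro k
    calc vecNorm (ν (k + 1))
        ≤ specNorm F₁⁻¹ * (specNorm F₂ *
            vecNorm (∑ j ∈ range (k + 1), vkron (ν j) (ν (k + 1 - 1 - j)))) :=
          (vecNorm_le_of_mulVec_add_eq_zero hF₁ (hrec (k + 1) (by omega))).trans
            (mul_le_mul_of_nonneg_left (vecNorm_mulVec_le _ _) (specNorm_nonneg _))
      _ ≤ specNorm F₁⁻¹ * (specNorm F₂ *
            ∑ j ∈ range (k + 1), vecNorm (ν j) * vecNorm (ν (k - j))) := by
          gcongr
          · exact specNorm_nonneg _
          · exact specNorm_nonneg _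
          · simpa only [Nat.add_sub_cancel, vecNorm_vkron] using
              vecNorm_sum_le (range (k + 1)) fun j => vkron (ν j) (ν (k + 1 - 1 - j))
      _ = β * ∑ p ∈ antidiagonal k, vecNorm (ν p.1) * vecNorm (ν p.2) := by
          rw [Nat.sum_antidiagonal_eq_sum_range_succ_mk, hβ, mul_assoc]
  subst hR
  exact le_mul_four_mul_pow_of_le_sum_antidiagonal (fun i => vecNorm_nonneg _)
    (hα ▸ mul_nonneg (specNorm_nonneg _) (vecNorm_nonneg _))
    (hβ ▸ mul_nonneg (specNorm_nonneg _) (specNorm_nonneg _))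
    (hα ▸ vecNorm_le_of_mulVec_add_eq_zero hF₁ h0) hsucc
end

section
/- Let |ψ⟩ = α|0⟩|ψ₀⟩ + √(1−α²)|1⟩|ψ₁⟩ and |φ⟩ = β|0⟩|φ₀⟩ + √(1−β²)|1⟩|φ₁⟩, where |ψ₀⟩, |ψ₁⟩, |φ₀⟩, |φ₁⟩ are unit vectors and α, β ∈ [0,1]. Suppose ‖ψ − φ‖ ≤ δ < α. Then ‖ψ₀ − φ₀⟩‖ ≤ 2δ/(α − δ). -/
theorem stmt_10 {H : Type*} [NormedAddCommGroup H] [InnerProductSpace ℂ H]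
    (ψ₀ ψ₁ φ₀ φ₁ : H)
    (hψ₀ : ‖ψ₀‖ = 1) (hψ₁ : ‖ψ₁‖ = 1) (hφ₀ : ‖φ₀‖ = 1) (hφ₁ : ‖φ₁‖ = 1)
    (α β : ℝ) (hα : α ∈ Set.Icc (0 : ℝ) 1) (hβ : β ∈ Set.Icc (0 : ℝ) 1)
    (ψ φ : WithLp 2 (H × H))
    (hψ : ψ = (WithLp.equiv 2 (H × H)).symm
      (α • ψ₀, Real.sqrt (1 - α ^ 2) • ψ₁))
    (hφ : φ = (WithLp.equiv 2 (H × H)).symm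
      (β • φ₀, Real.sqrt (1 - β ^ 2) • φ₁))
    (δ : ℝ) (hδ : ‖ψ - φ‖ ≤ δ) (hδα : δ < α) :
    ‖ψ₀ - φ₀‖ ≤ 2 * δ / (α - δ) := by
  have hδ0 : 0 ≤ δ := le_trans (norm_nonneg _) hδ
  have hα0 : 0 < α := lt_of_le_of_lt hδ0 hδα
  -- first component bound
  have hfst : (ψ - φ).fst = α • ψ₀ - β • φ₀ := by
    subst hψ hφ; rfl
  have h1 : ‖α • ψ₀ - β • φ₀‖ ≤ δ := by
    rw [← hfst]
    refine le_trans ?_ hδ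
    have := WithLp.prod_norm_sq_eq_of_L2 (ψ - φ)
    nlinarith [norm_nonneg (ψ - φ), norm_nonneg (ψ - φ).fst, norm_nonneg (ψ - φ).snd,
      sq_nonneg ‖(ψ - φ).snd‖]
  have hαβ : |α - β| ≤ δ := by
    have h2 : ‖α • ψ₀‖ = α := by
      rw [norm_smul, hψ₀, Real.norm_eq_abs, abs_of_nonneg hα.1, mul_one]
    have h3 : ‖β • φ₀‖ = β := by
      rw [norm_smul, hφ₀, Real.norm_eq_abs, abs_of_nonneg hβ.1, mul_one]
    calc |α - β| = |‖α • ψ₀‖ - ‖β • φ₀‖| := by rw [h2, h3]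
      _ ≤ ‖α • ψ₀ - β • φ₀‖ := abs_norm_sub_norm_le _ _
      _ ≤ δ := h1
  have key : α * ‖ψ₀ - φ₀‖ ≤ 2 * δ := by
    have : α • ψ₀ - α • φ₀ = (α • ψ₀ - β • φ₀) + (β - α) • φ₀ := by
      rw [sub_smul]; abel
    calc α * ‖ψ₀ - φ₀‖ = ‖α • (ψ₀ - φ₀)‖ := by
          rw [norm_smul, Real.norm_eq_abs, abs_of_nonneg hα.1]
      _ = ‖(α • ψ₀ - β • φ₀) + (β - α) • φ₀‖ := by rw [smul_sub, this]
      _ ≤ ‖α • ψ₀ - β • φ₀‖ + ‖(β - α) • φ₀‖ := norm_add_le _ _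
      _ ≤ δ + δ := by
          refine add_le_add h1 ?_
          rw [norm_smul, hφ₀, Real.norm_eq_abs, mul_one, abs_sub_comm]
          exact hαβ
      _ = 2 * δ := by ring
  rw [le_div_iff₀ (by linarith)]
  nlinarith [norm_nonneg (ψ₀ - φ₀)]
end

section
/- For any invertible square matrix M with ‖M^{-1}‖ < 1 and any positive integer i, the block bidiagonal matrix P with diagonal blocks P_{j,j} = I^{⊗j} ⊗ M ⊗ I^{⊗(i−j)} and identity superdiagonal blocks satisfies ‖P^{-1}‖ ≤ ‖M^{-1}‖/(1 − ‖M^{-1}‖), a bound independent of i. -/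
/-- `I_n^{⊗ j} ⊗ M ⊗ I_n^{⊗ (i-j)}` acting on `ℝ^{n^{i+1}}`,
    indexed by functions `Fin (i+1) → Fin n`. -/
def paddedKron (n : ℕ) (M : Matrix (Fin n) (Fin n) ℝ) (i : ℕ) (j : Fin (i + 1)) :
    Matrix (Fin (i + 1) → Fin n) (Fin (i + 1) → Fin n) ℝ :=
  fun x y => M (x j) (y j) * ∏ k ∈ Finset.univ.erase j, (if x k = y k then (1 : ℝ) else 0)

/-- The block upper bidiagonal matrix `P` with diagonal blocks
    `P_{j,j} = I^{⊗j} ⊗ M ⊗ I^{⊗(i-j)}` and identity superdiagonal blocks. -/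
def bidiagP (n : ℕ) (M : Matrix (Fin n) (Fin n) ℝ) (i : ℕ) :
    Matrix ((Fin (i + 1)) × (Fin (i + 1) → Fin n)) ((Fin (i + 1)) × (Fin (i + 1) → Fin n)) ℝ :=
  fun p q =>
    if q.1 = p.1 then paddedKron n M i p.1 p.2 q.2
    else if (q.1 : ℕ) = (p.1 : ℕ) + 1 then (if p.2 = q.2 then 1 else 0)
    else 0

set_option linter.unusedSectionVars false
set_option maxHeartbeats 1000000
open scoped Matrix.Norms.L2Operator Kronecker



open Matrix in
lemma quad_le_norm {ι κ : Type*} [Fintype ι] [Fintype κ] [DecidableEq κ]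
    (A : Matrix ι κ ℝ) (v : κ → ℝ) :
    ∑ x, (A.mulVec v x)^2 ≤ ‖A‖^2 * ∑ y, (v y)^2 := by
  have h := A.l2_opNorm_mulVec ((WithLp.equiv 2 (κ → ℝ)).symm v)
  have h1 : ‖(EuclideanSpace.equiv ι ℝ).symm (A *ᵥ v)‖^2 = ∑ x, (A.mulVec v x)^2 := by
    rw [EuclideanSpace.norm_eq]
    rw [Real.sq_sqrt (by positivity)]
    simp [sq_abs]
  have h2 : ‖(WithLp.equiv 2 (κ → ℝ)).symm v‖^2 = ∑ y, (v y)^2 := by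
    rw [EuclideanSpace.norm_eq, Real.sq_sqrt (by positivity)]
    simp [sq_abs]
  calc ∑ x, (A.mulVec v x)^2 = ‖(EuclideanSpace.equiv ι ℝ).symm (A *ᵥ v)‖^2 := h1.symm
    _ ≤ (‖A‖ * ‖(WithLp.equiv 2 (κ → ℝ)).symm v‖)^2 := by
        have h' : ‖(EuclideanSpace.equiv ι ℝ).symm (A *ᵥ v)‖ ≤ ‖A‖ * ‖(WithLp.equiv 2 (κ → ℝ)).symm v‖ := h
        apply sq_le_sq' _ h'
        nlinarith [norm_nonneg ((EuclideanSpace.equiv ι ℝ).symm (A *ᵥ v)), norm_nonneg A, norm_nonneg ((WithLp.equiv 2 (κ → ℝ)).symm v)]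
    _ = ‖A‖^2 * ∑ y, (v y)^2 := by rw [mul_pow, h2]

open Matrix in
lemma norm_le_of_quad {ι κ : Type*} [Fintype ι] [Fintype κ] [DecidableEq κ]
    (A : Matrix ι κ ℝ) {c : ℝ} (hc : 0 ≤ c)
    (h : ∀ v : κ → ℝ, ∑ x, (A.mulVec v x)^2 ≤ c^2 * ∑ y, (v y)^2) : ‖A‖ ≤ c := by
  rw [Matrix.l2_opNorm_def]
  apply ContinuousLinearMap.opNorm_le_bound _ hc
  intro v
  have happ : (LinearEquiv.trans Matrix.toEuclideanLin LinearMap.toContinuousLinearMap A) v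
      = (WithLp.equiv 2 (ι → ℝ)).symm (A.mulVec ((WithLp.equiv 2 (κ → ℝ)) v)) := by
    simp [Matrix.toEuclideanLin_apply]
  rw [happ]
  rw [EuclideanSpace.norm_eq, EuclideanSpace.norm_eq]
  have := h ((WithLp.equiv 2 (κ → ℝ)) v)
  rw [show c * Real.sqrt (∑ x, ‖v x‖^2) = Real.sqrt (c^2 * ∑ x, ‖v x‖^2) by
    rw [Real.sqrt_mul (by positivity), Real.sqrt_sq hc]]
  apply Real.sqrt_le_sqrt
  simpa [sq_abs] using this


lemma paddedKron_eq (n : ℕ) (M : Matrix (Fin n) (Fin n) ℝ) (i : ℕ) (j : Fin (i + 1)) :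
    paddedKron n M i j =
      (M ⊗ₖ (1 : Matrix ({k : Fin (i+1) // k ≠ j} → Fin n) ({k : Fin (i+1) // k ≠ j} → Fin n) ℝ)).submatrix
        (Equiv.funSplitAt j (Fin n)) (Equiv.funSplitAt j (Fin n)) := by
  ext x y
  simp only [paddedKron, Matrix.submatrix_apply, Equiv.funSplitAt_apply, Matrix.kroneckerMap_apply,
    Matrix.one_apply]
  congr 1
  rw [Finset.prod_boole]
  congr 1
  simp only [eq_iff_iff, funext_iff]
  constructor
  · intro h k
    exact h k (Finset.mem_erase.mpr ⟨k.2, Finset.mem_univ _⟩)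
  · intro h k hk
    exact h ⟨k, (Finset.mem_erase.mp hk).1⟩

lemma paddedKron_mul (n : ℕ) (A B : Matrix (Fin n) (Fin n) ℝ) (i : ℕ) (j : Fin (i + 1)) :
    paddedKron n A i j * paddedKron n B i j = paddedKron n (A * B) i j := by
  rw [paddedKron_eq, paddedKron_eq, paddedKron_eq, Matrix.submatrix_mul_equiv,
    ← Matrix.mul_kronecker_mul, Matrix.one_mul]

lemma paddedKron_one (n : ℕ) (i : ℕ) (j : Fin (i + 1)) :
    paddedKron n (1 : Matrix (Fin n) (Fin n) ℝ) i j = 1 := by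
  rw [paddedKron_eq, Matrix.one_kronecker_one, Matrix.submatrix_one_equiv]

open Matrix in
lemma norm_kronecker_one_le {ι κ : Type*} [Fintype ι] [Fintype κ] [DecidableEq ι] [DecidableEq κ]
    (A : Matrix ι ι ℝ) :
    ‖A ⊗ₖ (1 : Matrix κ κ ℝ)‖ ≤ ‖A‖ := by
  apply norm_le_of_quad _ (norm_nonneg A)
  intro v
  have key : ∀ s w, (A ⊗ₖ (1 : Matrix κ κ ℝ)).mulVec v (s, w)
      = A.mulVec (fun t => v (t, w)) s := by
    intro s w
    simp only [Matrix.mulVec, dotProduct, Fintype.sum_prod_type, Matrix.kroneckerMap_apply,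
      Matrix.one_apply]
    rw [Finset.sum_comm]
    simp [mul_ite, Finset.sum_ite_eq, Finset.sum_ite_eq', mul_assoc]
  calc ∑ x : ι × κ, ((A ⊗ₖ (1 : Matrix κ κ ℝ)).mulVec v x)^2
      = ∑ w : κ, ∑ s : ι, (A.mulVec (fun t => v (t, w)) s)^2 := by
        rw [Fintype.sum_prod_type, Finset.sum_comm]
        simp only [key]
    _ ≤ ∑ w : κ, ‖A‖^2 * ∑ t : ι, (v (t, w))^2 := by
        apply Finset.sum_le_sum
        intro w _
        exact quad_le_norm A _
    _ = ‖A‖^2 * ∑ y : ι × κ, (v y)^2 := by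
        rw [← Finset.mul_sum, Fintype.sum_prod_type, Finset.sum_comm]

open Matrix in
lemma norm_submatrix_le {ι κ : Type*} [Fintype ι] [Fintype κ] [DecidableEq ι] [DecidableEq κ]
    (A : Matrix ι ι ℝ) (e : κ ≃ ι) :
    ‖A.submatrix e e‖ ≤ ‖A‖ := by
  apply norm_le_of_quad _ (norm_nonneg A)
  intro v
  have key : ∀ x, (A.submatrix e e).mulVec v x = A.mulVec (fun y => v (e.symm y)) (e x) := by
    intro x
    simp only [Matrix.mulVec, dotProduct, Matrix.submatrix_apply]
    rw [← e.sum_comp]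
    simp
  calc ∑ x, ((A.submatrix e e).mulVec v x)^2
      = ∑ x, (A.mulVec (fun y => v (e.symm y)) x)^2 := by
        simp only [key]; rw [← e.sum_comp]
    _ ≤ ‖A‖^2 * ∑ y, (v (e.symm y))^2 := quad_le_norm A _
    _ = ‖A‖^2 * ∑ y, (v y)^2 := by rw [← e.symm.sum_comp]

open Matrix in
lemma norm_paddedKron_le (n : ℕ) (A : Matrix (Fin n) (Fin n) ℝ) (i : ℕ) (j : Fin (i + 1)) :
    ‖paddedKron n A i j‖ ≤ ‖A‖ := by
  rw [paddedKron_eq]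
  exact le_trans (norm_submatrix_le _ _) (norm_kronecker_one_le A)


section blk
variable {β σ : Type*} [Fintype β] [Fintype σ] [DecidableEq β] [DecidableEq σ]

/-- Block diagonal with block index first. -/
def blkDiag (f : β → Matrix σ σ ℝ) : Matrix (β × σ) (β × σ) ℝ :=
  fun p q => if q.1 = p.1 then f p.1 p.2 q.2 else 0

lemma blkDiag_mul (f g : β → Matrix σ σ ℝ) :
    blkDiag f * blkDiag g = blkDiag (fun j => f j * g j) := by
  ext p q
  simp only [blkDiag, Matrix.mul_apply, Fintype.sum_prod_type]
  rcases p with ⟨j, x⟩; rcases q with ⟨k, y⟩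
  simp only
  rw [Finset.sum_eq_single j]
  · by_cases h : k = j
    · subst h
      simp [Matrix.mul_apply]
    · simp [h]
  · intro b _ hb
    simp [hb, Ne.symm hb]
  · simp

lemma blkDiag_one : blkDiag (fun _ : β => (1 : Matrix σ σ ℝ)) = 1 := by
  ext p q
  rcases p with ⟨j, x⟩; rcases q with ⟨k, y⟩
  by_cases h : k = j
  · subst h; by_cases h2 : x = y <;> simp [blkDiag, Matrix.one_apply, Prod.ext_iff, h2]
  · simp [blkDiag, Matrix.one_apply, Prod.ext_iff, h, Ne.symm h]

lemma blkDiag_mulVec (f : β → Matrix σ σ ℝ) (v : β × σ → ℝ) (p : β × σ) :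
    (blkDiag f).mulVec v p = (f p.1).mulVec (fun y => v (p.1, y)) p.2 := by
  rcases p with ⟨j, x⟩
  simp only [blkDiag, Matrix.mulVec, dotProduct, Fintype.sum_prod_type]
  rw [Finset.sum_eq_single j]
  · simp
  · intro b _ hb; simp [hb]
  · simp

lemma norm_blkDiag_le (f : β → Matrix σ σ ℝ) {c : ℝ} (hc : 0 ≤ c)
    (h : ∀ j, ‖f j‖ ≤ c) : ‖blkDiag f‖ ≤ c := by
  apply norm_le_of_quad _ hc
  intro v
  calc ∑ p : β × σ, ((blkDiag f).mulVec v p)^2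
      = ∑ j : β, ∑ x : σ, ((f j).mulVec (fun y => v (j, y)) x)^2 := by
        rw [Fintype.sum_prod_type]
        simp only [blkDiag_mulVec]
    _ ≤ ∑ j : β, c^2 * ∑ y : σ, (v (j, y))^2 := by
        apply Finset.sum_le_sum
        intro j _
        calc ∑ x : σ, ((f j).mulVec (fun y => v (j, y)) x)^2
            ≤ ‖f j‖^2 * ∑ y : σ, (v (j, y))^2 := quad_le_norm _ _
          _ ≤ c^2 * ∑ y : σ, (v (j, y))^2 := by
              apply mul_le_mul_of_nonneg_right _ (by positivity)
              exact pow_le_pow_left₀ (norm_nonneg _) (h j) 2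
    _ = c^2 * ∑ q : β × σ, (v q)^2 := by rw [← Finset.mul_sum, Fintype.sum_prod_type]

end blk

section shift
variable {σ : Type*} [Fintype σ] [DecidableEq σ] {i : ℕ}

def shiftN (i : ℕ) (σ : Type*) [DecidableEq σ] : Matrix (Fin (i+1) × σ) (Fin (i+1) × σ) ℝ :=
  fun p q => if (q.1 : ℕ) = (p.1 : ℕ) + 1 then (if p.2 = q.2 then 1 else 0) else 0

lemma shiftN_mulVec (v : Fin (i+1) × σ → ℝ) (p : Fin (i+1) × σ) :
    (shiftN i σ).mulVec v p =
      if h : (p.1 : ℕ) + 1 ≤ i then v (⟨(p.1 : ℕ) + 1, by omega⟩, p.2) else 0 := by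
  rcases p with ⟨j, x⟩
  simp only [shiftN, Matrix.mulVec, dotProduct, Fintype.sum_prod_type]
  by_cases h : (j : ℕ) + 1 ≤ i
  · rw [dif_pos h, Finset.sum_eq_single (⟨(j:ℕ)+1, by omega⟩ : Fin (i+1))]
    · simp [Finset.sum_ite_eq' , mul_comm]
    · intro b _ hb
      have : (b : ℕ) ≠ (j : ℕ) + 1 := fun hc => hb (Fin.ext hc)
      simp [this]
    · simp
  · rw [dif_neg h]
    apply Finset.sum_eq_zero
    intro k _
    have : (k : ℕ) ≠ (j : ℕ) + 1 := by omega
    simp [this]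

lemma norm_shiftN_le : ‖shiftN i σ‖ ≤ 1 := by
  apply norm_le_of_quad _ zero_le_one
  intro v
  rw [one_pow, one_mul]
  have key : ∀ p : Fin (i+1) × σ, ((shiftN i σ).mulVec v p)^2 =
      if h : (p.1 : ℕ) + 1 ≤ i then (v (⟨(p.1 : ℕ) + 1, by omega⟩, p.2))^2 else 0 := by
    intro p
    rw [shiftN_mulVec]
    split <;> simp
  have bound : ∀ p : Fin (i+1) × σ, ((shiftN i σ).mulVec v p)^2 ≤ (v (p.1 + 1, p.2))^2 := by
    intro p
    rw [key p]
    split_ifs with h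
    · apply le_of_eq
      have he : (⟨(p.1 : ℕ) + 1, by omega⟩ : Fin (i+1)) = p.1 + 1 := by
        apply Fin.ext
        rw [Fin.val_add_one_of_lt (by rw [Fin.lt_iff_val_lt_val, Fin.val_last]; omega)]
      rw [he]
    · positivity
  calc ∑ p, ((shiftN i σ).mulVec v p)^2
      ≤ ∑ p : Fin (i+1) × σ, (v (p.1 + 1, p.2))^2 :=
        Finset.sum_le_sum fun p _ => bound p
    _ = ∑ q, (v q)^2 := by
        exact Fintype.sum_equiv ((Equiv.addRight (1 : Fin (i+1))).prodCongr (Equiv.refl σ))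
          _ _ (fun p => rfl)

end shift

section supp
variable {σ : Type*} [Fintype σ] [DecidableEq σ]

/-- support-shift lemma -/
lemma shift_supp_mul {i : ℕ} {s t : ℕ} (A B : Matrix (Fin (i+1) × σ) (Fin (i+1) × σ) ℝ)
    (hA : ∀ p q, (q.1 : ℕ) ≠ (p.1 : ℕ) + s → A p q = 0)
    (hB : ∀ p q, (q.1 : ℕ) ≠ (p.1 : ℕ) + t → B p q = 0) :
    ∀ p q, (q.1 : ℕ) ≠ (p.1 : ℕ) + (s + t) → (A * B) p q = 0 := by
  intro p q h
  rw [Matrix.mul_apply]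
  apply Finset.sum_eq_zero
  intro r _
  by_cases hr : (r.1 : ℕ) = (p.1 : ℕ) + s
  · rw [hB r q (by omega), mul_zero]
  · rw [hA p r hr, zero_mul]

lemma shift_supp_pow {i : ℕ} (X : Matrix (Fin (i+1) × σ) (Fin (i+1) × σ) ℝ)
    (hX : ∀ p q, (q.1 : ℕ) ≠ (p.1 : ℕ) + 1 → X p q = 0) (m : ℕ) :
    ∀ p q, (q.1 : ℕ) ≠ (p.1 : ℕ) + m → (X ^ m) p q = 0 := by
  induction m with
  | zero =>
    intro p q h
    rw [pow_zero, Matrix.one_apply_ne (by rintro rfl; omega)]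
  | succ m ih =>
    intro p q h
    rw [pow_succ]
    exact shift_supp_mul _ _ ih hX p q (by omega)

end supp


section mainthm
variable {n i : ℕ}

lemma specNorm_eq_l2 {m n : Type*} [Fintype m] [Fintype n] [DecidableEq n]
    (A : Matrix m n ℝ) : specNorm A = ‖A‖ := rfl

lemma bidiagP_eq (n : ℕ) (M : Matrix (Fin n) (Fin n) ℝ) (i : ℕ) :
    bidiagP n M i = blkDiag (fun j => paddedKron n M i j) + shiftN i (Fin (i+1) → Fin n) := by
  ext p q
  rcases p with ⟨j, x⟩; rcases q with ⟨k, y⟩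
  simp only [bidiagP, blkDiag, shiftN, Matrix.add_apply]
  by_cases h1 : k = j
  · subst h1
    rw [if_pos rfl, if_pos rfl, if_neg (by omega), add_zero]
  · rw [if_neg h1, if_neg h1, zero_add]

theorem stmt_13 (n i : ℕ) (hn : 0 < n) (hi : 0 < i)
    (M : Matrix (Fin n) (Fin n) ℝ) (hM : IsUnit M)
    (hMinv : specNorm M⁻¹ < 1) :
    specNorm (bidiagP n M i)⁻¹ ≤ specNorm M⁻¹ / (1 - specNorm M⁻¹) := by
  classical
  obtain ⟨q, hq⟩ : ∃ q : ℝ, q = ‖M⁻¹‖ := ⟨_, rfl⟩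
  have hq0 : 0 ≤ q := hq ▸ norm_nonneg _
  have hq1 : q < 1 := by rw [hq]; rwa [specNorm_eq_l2] at hMinv
  have hdet : IsUnit M.det := (Matrix.isUnit_iff_isUnit_det M).mp hM
  have hMr : M * M⁻¹ = 1 := Matrix.mul_nonsing_inv M hdet
  obtain ⟨D, hD⟩ : ∃ D, D = blkDiag (fun j => paddedKron n M i j) := ⟨_, rfl⟩
  obtain ⟨E, hE⟩ : ∃ E, E = blkDiag (fun j => paddedKron n M⁻¹ i j) := ⟨_, rfl⟩
  obtain ⟨N, hN⟩ : ∃ N, N = shiftN i (Fin (i+1) → Fin n) := ⟨_, rfl⟩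
  have hDE : D * E = 1 := by
    rw [hD, hE, blkDiag_mul]
    simp only [paddedKron_mul, hMr, paddedKron_one]
    exact blkDiag_one
  obtain ⟨X, hX⟩ : ∃ X, X = E * N := ⟨_, rfl⟩
  obtain ⟨G, hG⟩ : ∃ G, G = ∑ m ∈ Finset.range (i+1), (-X)^m := ⟨_, rfl⟩
  have hXsupp : ∀ p q : Fin (i+1) × (Fin (i+1) → Fin n),
      (q.1 : ℕ) ≠ (p.1 : ℕ) + 1 → X p q = 0 := by
    have hEsupp : ∀ p q : Fin (i+1) × (Fin (i+1) → Fin n),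
        (q.1 : ℕ) ≠ (p.1 : ℕ) + 0 → E p q = 0 := by
      intro p q h
      rw [hE]
      exact if_neg (by intro hc; exact h (by rw [hc, add_zero]))
    have hNsupp : ∀ p q : Fin (i+1) × (Fin (i+1) → Fin n),
        (q.1 : ℕ) ≠ (p.1 : ℕ) + 1 → N p q = 0 := by
      intro p q h
      rw [hN]
      exact if_neg h
    intro p q h
    rw [hX]
    exact shift_supp_mul E N hEsupp hNsupp p q (by omega)
  have hXnil : X ^ (i+1) = 0 := by
    ext p q
    rw [Matrix.zero_apply]
    exact shift_supp_pow X hXsupp (i+1) p q (by omega)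
  have hnegXnil : (-X) ^ (i+1) = 0 := by
    rw [neg_pow, hXnil, mul_zero]
  have hXG : (1 + X) * G = 1 := by
    have h1 := mul_geom_sum (-X) (i+1)
    rw [hnegXnil, zero_sub, ← hG] at h1
    have h2 : -X - 1 = -(1 + X) := by abel
    rw [h2, neg_mul] at h1
    exact neg_injective h1
  have hPfact : bidiagP n M i = D * (1 + X) := by
    rw [bidiagP_eq, ← hD, ← hN, mul_add, mul_one, hX, ← mul_assoc, hDE, one_mul]
  have hinv : bidiagP n M i * (G * E) = 1 := by
    rw [hPfact]
    calc D * (1 + X) * (G * E) = D * ((1 + X) * G) * E := by noncomm_ring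
      _ = D * E := by rw [hXG, mul_one]
      _ = 1 := hDE
  have hinveq : (bidiagP n M i)⁻¹ = G * E := Matrix.inv_eq_right_inv hinv
  -- norms
  have hEnorm : ‖E‖ ≤ q := by
    rw [hE, hq]
    exact norm_blkDiag_le _ (norm_nonneg _) (fun j => norm_paddedKron_le n M⁻¹ i j)
  have hXnorm : ‖X‖ ≤ q := by
    rw [hX]
    calc ‖E * N‖ ≤ ‖E‖ * ‖N‖ := norm_mul_le E N
      _ ≤ q * 1 := mul_le_mul hEnorm (hN ▸ norm_shiftN_le) (norm_nonneg _) hq0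
      _ = q := mul_one q
  have hterm : ∀ m : ℕ, ‖(-X)^m * E‖ ≤ q^(m+1) := by
    intro m
    induction m with
    | zero => simpa using hEnorm
    | succ m ih =>
      calc ‖(-X)^(m+1) * E‖ = ‖(-X) * ((-X)^m * E)‖ := by rw [← mul_assoc, ← pow_succ']
        _ ≤ ‖-X‖ * ‖(-X)^m * E‖ := norm_mul_le _ _
        _ ≤ q * q^(m+1) := by
            apply mul_le_mul _ ih (norm_nonneg _) hq0
            rwa [norm_neg]
        _ = q^(m+2) := by ring
  have hGE : ‖G * E‖ ≤ q / (1 - q) := by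
    rw [hG, Finset.sum_mul]
    calc ‖∑ m ∈ Finset.range (i+1), (-X)^m * E‖
        ≤ ∑ m ∈ Finset.range (i+1), ‖(-X)^m * E‖ := norm_sum_le _ _
      _ ≤ ∑ m ∈ Finset.range (i+1), q^(m+1) := Finset.sum_le_sum fun m _ => hterm m
      _ = q * ∑ m ∈ Finset.range (i+1), q^m := by
          rw [Finset.mul_sum]
          exact Finset.sum_congr rfl fun m _ => by ring
      _ ≤ q / (1 - q) := by
          have h1q : 0 < 1 - q := by linarith
          have hs : (∑ m ∈ Finset.range (i+1), q^m) ≤ 1 / (1 - q) := by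
            rw [le_div_iff₀ h1q, mul_comm]
            have := geom_sum_mul q (i+1)
            nlinarith [pow_nonneg hq0 (i+1)]
          calc q * ∑ m ∈ Finset.range (i+1), q^m ≤ q * (1 / (1 - q)) :=
                mul_le_mul_of_nonneg_left hs hq0
            _ = q / (1 - q) := by ring
  rw [specNorm_eq_l2, specNorm_eq_l2, hinveq, ← hq]
  exact hGE

end mainthm
end
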